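/- Let k be a natural number and let t, r : (Fin k → WithBot ℕ) → (Fin k → WithBot ℕ) be monotone functions with x ≤ r (t x) for all x (so (t, r) is a pseudo-retraction of the domain onto itself). Then r ∘ t is the identity and t is strict: t ⊥ = ⊥, where ⊥ is the everywhere-bottom element. -/

import Mathlib

/-! In the flat product every element is the meet of the maximal (totally defined) elements
above it. The monotone map `r ∘ t` is inflationary, so it fixes each maximal element, and
hence every element. Then `t` is injective and monotone, i.e. strictly monotone, so it cannot
lower coheight: `coheight ⊥ ≤ coheight (t ⊥)`. The domain has finite height (a strictly
increasing chain strictly shrinks the set of undefined coordinates), and every element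
strictly above `⊥` has strictly smaller coheight than `⊥`, so `t ⊥ = ⊥`. -/

/-- The flat domain of natural numbers: the carrier is `WithBot ℕ`, ordered so
that `⊥` is below every numeral and distinct numerals are incomparable. -/
def FlatNat : Type := WithBot ℕ

namespace FlatNat

instance : PartialOrder FlatNat where
  le a b := a = (⊥ : WithBot ℕ) ∨ a = b
  le_refl a := Or.inr rfl
  le_trans a b c hab hbc := by
    rcases hab with h | h
    · exact Or.inl h
    · rw [h]; exact hbc
  le_antisymm a b hab hba := by
    rcases hab with h | h
    · rcases hba with h' | h'
      · rw [h, h']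
      · exact h'.symm
    · exact h

instance : OrderBot FlatNat where
  bot := (⊥ : WithBot ℕ)
  bot_le a := Or.inl rfl

end FlatNat

open Function Order Finset

def IsMeetOfMaximals (α : Type*) [Preorder α] : Prop :=
  ∀ x z : α, (∀ m, IsMax m → x ≤ m → z ≤ m) → z ≤ x

theorem IsMeetOfMaximals.eq_id_of_monotone_of_le {α : Type*} [PartialOrder α]
    (hα : IsMeetOfMaximals α) {f : α → α} (hf : Monotone f) (hle : ∀ x, x ≤ f x) : f = id :=
  funext fun x => le_antisymm (hα x (f x) fun _ hm hxm => (hf hxm).trans (hm (hle _))) (hle x)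

theorem IsMeetOfMaximals.pi {ι : Type*} [DecidableEq ι] {π : ι → Type*} [∀ i, Preorder (π i)]
    (h : ∀ i, IsMeetOfMaximals (π i)) (hmax : ∀ i (a : π i), ∃ m, a ≤ m ∧ IsMax m) :
    IsMeetOfMaximals (∀ i, π i) := by
  intro x z hz i
  choose m hxm hm using fun j => hmax j (x j)
  refine h i (x i) (z i) fun a ha hxa => ?_
  have hupdate_max : IsMax (update m i a) := fun b hb j => by
    rcases eq_or_ne j i with rfl | hj
    · simpa using ha (by simpa using hb j)
    · simpa [hj] using hm j (by simpa [hj] using hb j)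
  have hle_update : x ≤ update m i a := le_update_iff.mpr ⟨hxa, fun j _ => hxm j⟩
  simpa using hz _ hupdate_max hle_update i

theorem Order.coheight_le_of_strictAnti {α : Type*} [Preorder α] {g : α → ℕ}
    (hg : StrictAnti g) (a : α) : coheight a ≤ g a := by
  simpa using coheight_le_coheight_apply_of_strictMono (OrderDual.toDual ∘ g) hg.dual_right a

theorem StrictMono.apply_bot_eq_bot {α : Type*} [PartialOrder α] [OrderBot α]
    (hα : coheight (⊥ : α) < ⊤) {f : α → α} (hf : StrictMono f) : f ⊥ = ⊥ := by
  by_contra hne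
  have hle : coheight (⊥ : α) ≤ coheight (f ⊥) := coheight_le_coheight_apply_of_strictMono f hf ⊥
  have hfin : coheight (f ⊥) < ⊤ := (coheight_anti bot_le).trans_lt hα
  exact (coheight_strictAnti (bot_lt_iff_ne_bot.mpr hne) hfin).not_ge hle

namespace FlatNat

theorem le_iff {a b : FlatNat} : a ≤ b ↔ a = ⊥ ∨ a = b := Iff.rfl

instance : DecidableEq FlatNat := inferInstanceAs (DecidableEq (WithBot ℕ))

def num (n : ℕ) : FlatNat := (n : WithBot ℕ)

theorem num_ne_bot (n : ℕ) : num n ≠ ⊥ := WithBot.coe_ne_bot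

theorem num_injective : Injective num := WithBot.coe_injective

theorem eq_bot_or_eq_num (a : FlatNat) : a = ⊥ ∨ ∃ n, a = num n := by
  induction a using WithBot.recBotCoe with
  | bot => exact Or.inl rfl
  | coe n => exact Or.inr ⟨n, rfl⟩

theorem isMax_num (n : ℕ) : IsMax (num n) := fun _ hb =>
  le_iff.mpr (Or.inr (hb.resolve_left (num_ne_bot n)).symm)

theorem exists_le_isMax (a : FlatNat) : ∃ m, a ≤ m ∧ IsMax m := by
  obtain rfl | ⟨n, rfl⟩ := eq_bot_or_eq_num a
  · exact ⟨num 0, bot_le, isMax_num 0⟩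
  · exact ⟨num n, le_rfl, isMax_num n⟩

theorem isMeetOfMaximals : IsMeetOfMaximals FlatNat := by
  intro x z hz
  obtain rfl | ⟨n, rfl⟩ := eq_bot_or_eq_num x
  · obtain h0 | h0 := hz _ (isMax_num 0) bot_le
    · exact h0.le
    obtain h1 | h1 := hz _ (isMax_num 1) bot_le
    · exact h1.le
    exact absurd (num_injective (h0.symm.trans h1)) zero_ne_one
  · exact hz _ (isMax_num n) le_rfl

theorem eq_of_le_of_eq_bot_imp {a b : FlatNat} (hab : a ≤ b) (h : a = ⊥ → b = ⊥) : a = b :=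
  (le_iff.mp hab).elim (fun ha => ha.trans (h ha).symm) id

variable {ι : Type*} [Fintype ι]

theorem strictAnti_card_eq_bot :
    StrictAnti fun y : ι → FlatNat => #{j | y j = ⊥} := by
  intro a b hab
  refine Finset.card_lt_card (LE.le.ssubset_of_not_superset ?_ fun hsub => hab.ne ?_)
  · intro j
    simpa using fun hb => le_bot_iff.mp (hb ▸ hab.le j)
  · funext j
    refine eq_of_le_of_eq_bot_imp (hab.le j) fun ha => ?_
    simpa using hsub (by simpa using ha)

theorem coheight_bot_lt_top : coheight (⊥ : ι → FlatNat) < ⊤ :=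
  (coheight_le_of_strictAnti strictAnti_card_eq_bot ⊥).trans_lt (ENat.natCast_lt_top _)

end FlatNat

/-- Any pseudo-retraction of the `k`-fold product of the flat domain of natural
numbers onto itself is an actual retraction, and its section is strict. -/
theorem pseudo_retraction_strict (k : ℕ)
    (t r : (Fin k → FlatNat) → (Fin k → FlatNat))
    (ht : Monotone t) (hr : Monotone r) (hret : ∀ x, x ≤ r (t x)) :
    r ∘ t = id ∧ t ⊥ = ⊥ := by
  have hretract : r ∘ t = id :=
    (IsMeetOfMaximals.pi (fun _ => FlatNat.isMeetOfMaximals) fun _ => FlatNat.exists_le_isMax)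
      |>.eq_id_of_monotone_of_le (hr.comp ht) hret
  have ht_inj : Injective t := LeftInverse.injective (g := r) (congrFun hretract)
  exact ⟨hretract, (ht.strictMono_of_injective ht_inj).apply_bot_eq_bot FlatNat.coheight_bot_lt_top⟩
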